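/- Let k ≥ 1 and let a_1 < a_2 < … < a_k be positive integers, A = {a_1,…,a_k}. In ℚ[[x,y]] set T_j = x^{a_j}·y·(1 + x^{a_j}·y)^{-1} for 1 ≤ j ≤ k (the inverse exists since 1 + x^{a_j}y has constant term 1). Then ∑_{n≥0} ∑_{σ∈E_n^A} rises(σ)·x^n·y^{parts(σ)} = ( ∑_{j=1}^k T_j · ∑_{i=1}^{j−1} T_i ) · ( 1 − ∑_{j=1}^k T_j )^{-2}, and the same identity holds with drops(σ) in place of rises(σ). -/

import Mathlib

open scoped Classical

open MvPowerSeries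

set_option maxHeartbeats 1000000

/-- Number of rises of a list (adjacent pairs with strict increase). -/
def risesL (l : List ℕ) : ℕ := (l.zip l.tail).countP (fun p => decide (p.1 < p.2))

/-- Number of drops of a list (adjacent pairs with strict decrease). -/
def dropsL (l : List ℕ) : ℕ := (l.zip l.tail).countP (fun p => decide (p.2 < p.1))

/-- `∑_{n≥0} ∑_{σ∈E_n^A} rises(σ) x^n y^{parts(σ)}` in `ℚ[[x,y]]`, with
`x = X 0`, `y = X 1`; `E_n^A` is the set of Carlitz compositions of `n` with
parts in `A = {a 1, …, a k}`. -/
noncomputable def eRises {k : ℕ} (a : Fin k → ℕ) : MvPowerSeries (Fin 2) ℚ :=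
  fun m => ((∑ c ∈ Finset.univ.filter (fun c : Composition (m 0) =>
      (∀ b ∈ c.blocks, ∃ i, a i = b) ∧ c.blocks.Chain' (· ≠ ·) ∧ c.length = m 1),
      risesL c.blocks : ℕ) : ℚ)

/-- `∑_{n≥0} ∑_{σ∈E_n^A} drops(σ) x^n y^{parts(σ)}` in `ℚ[[x,y]]`. -/
noncomputable def eDrops {k : ℕ} (a : Fin k → ℕ) : MvPowerSeries (Fin 2) ℚ :=
  fun m => ((∑ c ∈ Finset.univ.filter (fun c : Composition (m 0) =>
      (∀ b ∈ c.blocks, ∃ i, a i = b) ∧ c.blocks.Chain' (· ≠ ·) ∧ c.length = m 1),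
      dropsL c.blocks : ℕ) : ℚ)

/-- `T j = x^{a_j} y (1 + x^{a_j} y)⁻¹`. -/
noncomputable def TT {k : ℕ} (a : Fin k → ℕ) (j : Fin k) : MvPowerSeries (Fin 2) ℚ :=
  (X 0) ^ (a j) * X 1 * (1 + (X 0) ^ (a j) * X 1)⁻¹

namespace Stmt13Aux

/-! ### List lemmas -/

lemma zip_tail_concat {α : Type*} : ∀ (l : List α) (h : l ≠ []) (b : α),
    ((l ++ [b]).zip (l ++ [b]).tail) = l.zip l.tail ++ [(l.getLast h, b)]
  | [x], _, b => by simp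
  | x :: y :: t, _, b => by
    have ih := zip_tail_concat (y :: t) (List.cons_ne_nil y t) b
    simp only [List.cons_append, List.zip_cons_cons, List.tail_cons] at ih ⊢
    rw [ih, List.getLast_cons (List.cons_ne_nil y t)]

lemma risesL_concat (l : List ℕ) (h : l ≠ []) (b : ℕ) :
    risesL (l ++ [b]) = risesL l + (if l.getLast h < b then 1 else 0) := by
  unfold risesL
  rw [zip_tail_concat l h b, List.countP_append]
  simp [List.countP_cons]

lemma dropsL_concat (l : List ℕ) (h : l ≠ []) (b : ℕ) :
    dropsL (l ++ [b]) = dropsL l + (if b < l.getLast h then 1 else 0) := by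
  unfold dropsL
  rw [zip_tail_concat l h b, List.countP_append]
  simp [List.countP_cons]

lemma risesL_cons (b : ℕ) (l : List ℕ) (h : l ≠ []) :
    risesL (b :: l) = (if b < l.head h then 1 else 0) + risesL l := by
  cases l with
  | nil => exact absurd rfl h
  | cons x t =>
    unfold risesL
    simp only [List.tail_cons, List.zip_cons_cons, List.countP_cons, List.head_cons]
    simp only [decide_eq_true_eq]
    exact Nat.add_comm _ _

lemma risesL_reverse : ∀ (l : List ℕ), risesL l.reverse = dropsL l := by
  intro l
  induction l using List.reverseRecOn with
  | nil => rfl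
  | append_singleton l b ih =>
    rcases eq_or_ne l [] with rfl | h
    · rfl
    · have hrev : (l ++ [b]).reverse = b :: l.reverse := by simp
      have hrevne : l.reverse ≠ [] := by simpa using h
      rw [hrev, risesL_cons b l.reverse hrevne, List.head_reverse, ih,
        dropsL_concat l h b, Nat.add_comm]

/-! ### Coefficient sums over compositions -/

variable {k : ℕ}

/-- Base predicate: parts in `A`, Carlitz, given length. -/
def baseP (a : Fin k → ℕ) (L : ℕ) {n : ℕ} (c : Composition n) : Prop :=
  (∀ b ∈ c.blocks, ∃ i, a i = b) ∧ c.blocks.Chain' (· ≠ ·) ∧ c.blocks.length = L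

noncomputable def csum (a : Fin k → ℕ) (w : List ℕ → ℚ) (Q : List ℕ → Prop) (n L : ℕ) : ℚ :=
  ∑ c ∈ (Finset.univ.filter (fun c : Composition n => baseP a L c)).filter
      (fun c => Q c.blocks), w c.blocks

lemma csum_congr {a : Fin k → ℕ} {w : List ℕ → ℚ} {Q Q' : List ℕ → Prop} {n L : ℕ}
    (h : ∀ c : Composition n, baseP a L c → (Q c.blocks ↔ Q' c.blocks)) :
    csum a w Q n L = csum a w Q' n L := by
  unfold csum
  congr 1
  refine Finset.filter_congr ?_
  intro c hc
  simp only [Finset.mem_filter] at hc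
  exact h c hc.2

lemma csum_wcongr {a : Fin k → ℕ} {w w' : List ℕ → ℚ} {Q : List ℕ → Prop} {n L : ℕ}
    (h : ∀ c : Composition n, baseP a L c → Q c.blocks → w c.blocks = w' c.blocks) :
    csum a w Q n L = csum a w' Q n L := by
  unfold csum
  refine Finset.sum_congr rfl ?_
  intro c hc
  simp only [Finset.mem_filter] at hc
  exact h c hc.1.2 hc.2

lemma csum_split {a : Fin k → ℕ} {w : List ℕ → ℚ} {Q : List ℕ → Prop} {n L : ℕ}
    (P : List ℕ → Prop) :
    csum a w Q n L
      = csum a w (fun l => Q l ∧ P l) n L + csum a w (fun l => Q l ∧ ¬ P l) n L := by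
  unfold csum
  rw [← Finset.sum_filter_add_sum_filter_not
    (((Finset.univ.filter (fun c : Composition n => baseP a L c)).filter
      (fun c => Q c.blocks))) (fun c => P c.blocks)]
  congr 1 <;>
  · refine Finset.sum_congr ?_ (fun _ _ => rfl)
    ext c
    simp only [Finset.mem_filter]
    tauto

lemma csum_add {a : Fin k → ℕ} (w w' : List ℕ → ℚ) {Q : List ℕ → Prop} {n L : ℕ} :
    csum a (fun l => w l + w' l) Q n L = csum a w Q n L + csum a w' Q n L :=
  Finset.sum_add_distrib

lemma csum_indicator {a : Fin k → ℕ} (P Q : List ℕ → Prop) {n L : ℕ} :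
    csum a (fun l => if P l then (1 : ℚ) else 0) Q n L
      = csum a (fun _ => (1 : ℚ)) (fun l => Q l ∧ P l) n L := by
  unfold csum
  set t := Finset.univ.filter (fun c : Composition n => baseP a L c) with ht
  calc ∑ c ∈ t.filter (fun c => Q c.blocks), (if P c.blocks then (1 : ℚ) else 0)
      = ∑ c ∈ (t.filter (fun c => Q c.blocks)).filter (fun c => P c.blocks), (1 : ℚ) :=
        (Finset.sum_filter _ _).symm
    _ = _ := by
        refine Finset.sum_congr ?_ (fun _ _ => rfl)
        ext c
        simp only [Finset.mem_filter]
        tauto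

noncomputable def chi (P : Prop) : ℚ := if P then 1 else 0

lemma chi_true {P : Prop} (h : P) : chi P = 1 := if_pos h

lemma chi_false {P : Prop} (h : ¬ P) : chi P = 0 := if_neg h

lemma csum_chi {a : Fin k → ℕ} (P Q : List ℕ → Prop) {n L : ℕ} :
    csum a (fun l => chi (P l)) Q n L
      = csum a (fun _ => (1 : ℚ)) (fun l => Q l ∧ P l) n L :=
  csum_indicator P Q

lemma blocks_nil_of_comp0 (c : Composition 0) : c.blocks = [] := by
  rcases hb : c.blocks with _ | ⟨x, t⟩
  · rfl
  · exfalso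
    have hx : 0 < x := c.blocks_pos (by rw [hb]; exact List.mem_cons_self)
    have hsum := c.blocks_sum
    rw [hb] at hsum
    simp only [List.sum_cons] at hsum
    omega

lemma csum_nil (a : Fin k → ℕ) (n L : ℕ) :
    csum a (fun _ => (1 : ℚ)) (fun l => l = []) n L = if n = 0 ∧ L = 0 then 1 else 0 := by
  by_cases h : n = 0 ∧ L = 0
  · obtain ⟨rfl, rfl⟩ := h
    rw [if_pos ⟨rfl, rfl⟩]
    unfold csum
    refine (Finset.sum_congr ?_ (fun _ _ => rfl)).trans
      (Finset.sum_singleton (fun _ => (1 : ℚ)) (⟨[], by simp, rfl⟩ : Composition 0))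
    ext c
    simp only [Finset.mem_filter, Finset.mem_univ, true_and, Finset.mem_singleton]
    constructor
    · rintro ⟨-, hnil⟩
      exact Composition.ext hnil
    · rintro rfl
      exact ⟨⟨by simp, List.isChain_nil, rfl⟩, rfl⟩
  · rw [if_neg h]
    unfold csum
    refine (Finset.sum_congr (Finset.eq_empty_of_forall_notMem ?_)
      (fun _ _ => rfl)).trans Finset.sum_empty
    intro c hc
    simp only [Finset.mem_filter, Finset.mem_univ, true_and] at hc
    obtain ⟨⟨-, -, hlen⟩, hnil⟩ := hc
    have hn : n = 0 := by
      have := c.blocks_sum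
      rw [hnil] at this
      simpa using this.symm
    have hL : L = 0 := by rw [← hlen, hnil]; rfl
    exact h ⟨hn, hL⟩

lemma csum_rises_nil (a : Fin k → ℕ) (Q : List ℕ → Prop) (n L : ℕ)
    (hQ : ∀ l, Q l → l = []) :
    csum a (fun l => (risesL l : ℚ)) Q n L = 0 := by
  unfold csum
  refine Finset.sum_eq_zero ?_
  intro c hc
  simp only [Finset.mem_filter] at hc
  rw [hQ _ hc.2]
  rfl

/-- Partition by the last part. -/
lemma sum_last (a : Fin k → ℕ) (hinj : Function.Injective a) (w : List ℕ → ℚ)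
    (s : Finset (Fin k)) (n L : ℕ) :
    ∑ i ∈ s, csum a w (fun l => l.getLast? = some (a i)) n L
      = csum a w (fun l => ∃ i ∈ s, l.getLast? = some (a i)) n L := by
  unfold csum
  set t := Finset.univ.filter (fun c : Composition n => baseP a L c) with ht
  simp only [Finset.sum_filter]
  rw [Finset.sum_comm]
  refine Finset.sum_congr rfl ?_
  intro c _
  by_cases hex : ∃ i ∈ s, c.blocks.getLast? = some (a i)
  · obtain ⟨i0, hi0s, hi0⟩ := hex
    rw [if_pos ⟨i0, hi0s, hi0⟩, Finset.sum_eq_single i0]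
    · rw [if_pos hi0]
    · intro i his hne
      rw [if_neg]
      intro hcon
      exact hne (hinj (Option.some.inj (hcon.symm.trans hi0)))
    · intro h0
      exact absurd hi0s h0
  · rw [if_neg hex]
    refine Finset.sum_eq_zero fun i his => ?_
    rw [if_neg fun hcon => hex ⟨i, his, hcon⟩]

/-- Strip the last part `a j`. -/
lemma sum_append (a : Fin k → ℕ) (hpos : ∀ i, 0 < a i) (j : Fin k) (w : List ℕ → ℚ)
    (n L : ℕ) (hn : a j ≤ n) :
    csum a w (fun l => l.getLast? = some (a j)) n (L + 1)
      = csum a (fun l => w (l ++ [a j])) (fun l => l.getLast? ≠ some (a j)) (n - a j) L := by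
  unfold csum
  refine Finset.sum_bij' (i := fun c hc => ?_) (j := fun c hc => ?_) ?_ ?_ ?_ ?_ ?_
  · -- forward map : drop last block
    have hc' : c.blocks.getLast? = some (a j) := by
      simp only [Finset.mem_filter] at hc
      exact hc.2
    have hne : c.blocks ≠ [] := by
      intro h0; rw [h0] at hc'; simp at hc'
    have hlast : c.blocks.getLast hne = a j :=
      Option.some.inj ((List.getLast?_eq_getLast hne).symm.trans hc')
    refine ⟨c.blocks.dropLast, ?_, ?_⟩
    · intro b hb
      exact c.blocks_pos (List.mem_of_mem_dropLast hb)
    · have hsum := c.blocks_sum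
      conv_lhs at hsum => rw [← List.dropLast_append_getLast hne]
      rw [List.sum_append, List.sum_cons, List.sum_nil, hlast] at hsum
      omega
  · -- backward map : append a j
    refine ⟨c.blocks ++ [a j], ?_, ?_⟩
    · intro b hb
      rcases List.mem_append.mp hb with hb | hb
      · exact c.blocks_pos hb
      · rw [List.mem_singleton.mp hb]; exact hpos j
    · rw [List.sum_append, List.sum_cons, List.sum_nil, c.blocks_sum]
      omega
  · -- forward membership
    intro c hc
    simp only [Finset.mem_filter, Finset.mem_univ, true_and] at hc ⊢
    obtain ⟨⟨hparts, hchain, hlen⟩, hlastq⟩ := hc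
    have hne : c.blocks ≠ [] := by
      intro h0; rw [h0] at hlastq; simp at hlastq
    have hlast : c.blocks.getLast hne = a j :=
      Option.some.inj ((List.getLast?_eq_getLast hne).symm.trans hlastq)
    have hdecomp : c.blocks.dropLast ++ [a j] = c.blocks := by
      rw [← hlast]; exact List.dropLast_append_getLast hne
    have hchain2 : (c.blocks.dropLast ++ [a j]).Chain' (· ≠ ·) := by
      rw [hdecomp]; exact hchain
    rcases List.isChain_append.mp hchain2 with ⟨hchain3, -, hlastcond⟩
    refine ⟨⟨?_, hchain3, ?_⟩, ?_⟩
    · intro b hb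
      exact hparts b (List.mem_of_mem_dropLast hb)
    · show c.blocks.dropLast.length = L
      rw [List.length_dropLast, hlen]
      omega
    · show ¬ c.blocks.dropLast.getLast? = some (a j)
      intro hcon
      exact hlastcond (a j) hcon (a j) rfl rfl
  · -- backward membership
    intro c hc
    simp only [Finset.mem_filter, Finset.mem_univ, true_and] at hc ⊢
    obtain ⟨⟨hparts, hchain, hlen⟩, hlastq⟩ := hc
    refine ⟨⟨?_, ?_, ?_⟩, ?_⟩
    · intro b hb
      rcases List.mem_append.mp hb with hb | hb
      · exact hparts b hb
      · exact ⟨j, (List.mem_singleton.mp hb).symm⟩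
    · refine List.isChain_append.mpr ⟨hchain, List.isChain_singleton _, ?_⟩
      intro x hx y hy
      have hx' : c.blocks.getLast? = some x := hx
      have hy' : y = a j := by
        have : [a j].head? = some y := hy
        simpa using this.symm
      intro hxy
      apply hlastq
      rw [hx', hxy, hy']
    · show (c.blocks ++ [a j]).length = L + 1
      rw [List.length_append, hlen]
      rfl
    · show (c.blocks ++ [a j]).getLast? = some (a j)
      exact List.getLast?_concat
  · -- left inverse
    intro c hc
    have hc' : c.blocks.getLast? = some (a j) := by
      simp only [Finset.mem_filter] at hc
      exact hc.2
    have hne : c.blocks ≠ [] := by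
      intro h0; rw [h0] at hc'; simp at hc'
    have hlast : c.blocks.getLast hne = a j :=
      Option.some.inj ((List.getLast?_eq_getLast hne).symm.trans hc')
    refine Composition.ext ?_
    show c.blocks.dropLast ++ [a j] = c.blocks
    rw [← hlast]
    exact List.dropLast_append_getLast hne
  · -- right inverse
    intro c hc
    refine Composition.ext ?_
    show (c.blocks ++ [a j]).dropLast = c.blocks
    exact List.dropLast_concat
  · -- weights
    intro c hc
    have hc' : c.blocks.getLast? = some (a j) := by
      simp only [Finset.mem_filter] at hc
      exact hc.2
    have hne : c.blocks ≠ [] := by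
      intro h0; rw [h0] at hc'; simp at hc'
    have hlast : c.blocks.getLast hne = a j :=
      Option.some.inj ((List.getLast?_eq_getLast hne).symm.trans hc')
    show w c.blocks = w (c.blocks.dropLast ++ [a j])
    congr 1
    rw [← hlast]
    exact (List.dropLast_append_getLast hne).symm

/-! ### The series -/

noncomputable def ee (a : Fin k → ℕ) (j : Fin k) : Fin 2 →₀ ℕ :=
  Finsupp.single 0 (a j) + Finsupp.single 1 1

lemma ee_apply0 (a : Fin k → ℕ) (j : Fin k) : ee a j 0 = a j := by
  simp [ee, Finsupp.single_apply]

lemma ee_apply1 (a : Fin k → ℕ) (j : Fin k) : ee a j 1 = 1 := by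
  simp [ee, Finsupp.single_apply]

lemma u_eq (a : Fin k → ℕ) (j : Fin k) :
    (X 0 : MvPowerSeries (Fin 2) ℚ) ^ (a j) * X 1 = monomial (ee a j) 1 := by
  rw [X_pow_eq, ← pow_one (X 1 : MvPowerSeries (Fin 2) ℚ), X_pow_eq,
    monomial_mul_monomial, one_mul, ee]

lemma ee_le_iff (a : Fin k → ℕ) (j : Fin k) (m : Fin 2 →₀ ℕ) :
    ee a j ≤ m ↔ a j ≤ m 0 ∧ 1 ≤ m 1 := by
  rw [Finsupp.le_def, Fin.forall_fin_two, ee_apply0, ee_apply1]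

lemma sub_apply0 (a : Fin k → ℕ) (j : Fin k) (m : Fin 2 →₀ ℕ) :
    (m - ee a j) 0 = m 0 - a j := by
  rw [Finsupp.tsub_apply, ee_apply0]

lemma sub_apply1 (a : Fin k → ℕ) (j : Fin k) (m : Fin 2 →₀ ℕ) :
    (m - ee a j) 1 = m 1 - 1 := by
  rw [Finsupp.tsub_apply, ee_apply1]

lemma sub_eq_zero_iff (a : Fin k → ℕ) (j : Fin k) (m : Fin 2 →₀ ℕ) :
    m - ee a j = 0 ↔ (m 0 - a j = 0 ∧ m 1 - 1 = 0) := by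
  rw [Finsupp.ext_iff, Fin.forall_fin_two, sub_apply0, sub_apply1]
  simp

noncomputable def Cs (a : Fin k → ℕ) (j : Fin k) : MvPowerSeries (Fin 2) ℚ :=
  fun m => csum a (fun _ => (1 : ℚ)) (fun l => l.getLast? = some (a j)) (m 0) (m 1)

noncomputable def Rs (a : Fin k → ℕ) (j : Fin k) : MvPowerSeries (Fin 2) ℚ :=
  fun m => csum a (fun l => (risesL l : ℚ)) (fun l => l.getLast? = some (a j)) (m 0) (m 1)

lemma csum_last_zero (a : Fin k → ℕ) (j : Fin k) (w : List ℕ → ℚ) (n L : ℕ)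
    (h : ¬ (a j ≤ n ∧ 1 ≤ L)) :
    csum a w (fun l => l.getLast? = some (a j)) n L = 0 := by
  unfold csum
  refine (Finset.sum_congr (Finset.eq_empty_of_forall_notMem ?_)
    (fun _ _ => rfl)).trans Finset.sum_empty
  intro c hc
  simp only [Finset.mem_filter, Finset.mem_univ, true_and] at hc
  obtain ⟨⟨hparts, -, hlen⟩, hlast⟩ := hc
  have hne : c.blocks ≠ [] := by intro h0; rw [h0] at hlast; simp at hlast
  have hmem : a j ∈ c.blocks := by
    have h1 := List.getLast?_eq_getLast hne
    have h2 : c.blocks.getLast hne = a j := Option.some.inj (h1.symm.trans hlast)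
    rw [← h2]
    exact List.getLast_mem hne
  have hle1 : a j ≤ n := by
    have h3 := List.single_le_sum (l := c.blocks) (fun x _ => Nat.zero_le x) _ hmem
    rw [c.blocks_sum] at h3
    exact h3
  have hlen1 : 1 ≤ L := by
    rw [← hlen]
    have := List.length_pos_iff.mpr hne
    omega
  exact h ⟨hle1, hlen1⟩

lemma key1 (a : Fin k → ℕ) (hpos : ∀ i, 0 < a i) (hinj : Function.Injective a)
    (j : Fin k) (n L : ℕ) (hn : a j ≤ n) :
    csum a (fun _ => (1 : ℚ)) (fun l => l.getLast? = some (a j)) n (L + 1)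
      = (if n - a j = 0 ∧ L = 0 then 1 else 0)
        + ∑ i ∈ Finset.univ.filter (· ≠ j),
            csum a (fun _ => (1 : ℚ)) (fun l => l.getLast? = some (a i)) (n - a j) L := by
  rw [sum_append a hpos j _ n L hn]
  beta_reduce
  rw [csum_split (P := fun l => l = [])]
  congr 1
  · rw [csum_congr (Q' := fun l => l = []) (fun c _ => ?_)]
    · exact csum_nil a (n - a j) L
    · constructor
      · rintro ⟨-, h⟩
        exact h
      · intro h
        have h' : c.blocks = [] := h
        exact ⟨by rw [h']; simp, h⟩
  · rw [csum_congr
      (Q' := fun l => ∃ i ∈ Finset.univ.filter (· ≠ j), l.getLast? = some (a i)) (fun c hb => ?_),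
      ← sum_last a hinj]
    constructor
    · rintro ⟨hne', hnotnil⟩
      have hlast? := List.getLast?_eq_getLast hnotnil
      obtain ⟨i0, hi0⟩ := hb.1 _ (List.getLast_mem hnotnil)
      refine ⟨i0, ?_, by rw [hlast?, ← hi0]⟩
      simp only [Finset.mem_filter, Finset.mem_univ, true_and]
      intro heq
      apply hne'
      rw [hlast?, ← hi0, heq]
    · rintro ⟨i, hi, hlast⟩
      simp only [Finset.mem_filter, Finset.mem_univ, true_and] at hi
      constructor
      · rw [hlast]
        intro hcon
        exact hi (hinj (Option.some.inj hcon))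
      · intro hnil
        rw [hnil] at hlast
        simp at hlast

lemma key2 (a : Fin k → ℕ) (hpos : ∀ i, 0 < a i) (hmono : StrictMono a)
    (j : Fin k) (n L : ℕ) (hn : a j ≤ n) :
    csum a (fun l => (risesL l : ℚ)) (fun l => l.getLast? = some (a j)) n (L + 1)
      = (∑ i ∈ Finset.univ.filter (· ≠ j),
          csum a (fun l => (risesL l : ℚ)) (fun l => l.getLast? = some (a i)) (n - a j) L)
        + ∑ i ∈ Finset.univ.filter (· < j),
            csum a (fun _ => (1 : ℚ)) (fun l => l.getLast? = some (a i)) (n - a j) L := by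
  have hinj := hmono.injective
  rw [sum_append a hpos j _ n L hn]
  rw [csum_wcongr (w' := fun l => (risesL l : ℚ)
      + chi (∃ i ∈ Finset.univ.filter (· < j), l.getLast? = some (a i)))
      (fun c hb _ => ?_)]
  · rw [csum_add]
    congr 1
    · rw [csum_split (P := fun l => l = []),
        csum_rises_nil a _ _ _ (fun l hl => hl.2), zero_add,
        csum_congr
          (Q' := fun l => ∃ i ∈ Finset.univ.filter (· ≠ j), l.getLast? = some (a i))
          (fun c hb => ?_),
        ← sum_last a hinj]
      constructor
      · rintro ⟨hne', hnotnil⟩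
        have hlast? := List.getLast?_eq_getLast hnotnil
        obtain ⟨i0, hi0⟩ := hb.1 _ (List.getLast_mem hnotnil)
        refine ⟨i0, ?_, by rw [hlast?, ← hi0]⟩
        simp only [Finset.mem_filter, Finset.mem_univ, true_and]
        intro heq
        apply hne'
        rw [hlast?, ← hi0, heq]
      · rintro ⟨i, hi, hlast⟩
        simp only [Finset.mem_filter, Finset.mem_univ, true_and] at hi
        constructor
        · rw [hlast]
          intro hcon
          exact hi (hinj (Option.some.inj hcon))
        · intro hnil
          rw [hnil] at hlast
          simp at hlast
    · rw [csum_chi,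
        csum_congr
          (Q' := fun l => ∃ i ∈ Finset.univ.filter (· < j), l.getLast? = some (a i))
          (fun c _ => ?_),
        ← sum_last a hinj]
      constructor
      · exact fun h => h.2
      · rintro ⟨i, hi, hlast⟩
        simp only [Finset.mem_filter, Finset.mem_univ, true_and] at hi
        refine ⟨?_, ⟨i, Finset.mem_filter.mpr ⟨Finset.mem_univ _, hi⟩, hlast⟩⟩
        rw [hlast]
        intro hcon
        exact absurd (hinj (Option.some.inj hcon)) (ne_of_lt hi)
  · -- the weight identity
    beta_reduce
    rcases eq_or_ne c.blocks [] with hnil | hne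
    · rw [hnil, chi_false (by rintro ⟨i, -, h⟩; simp at h)]
      norm_num [risesL]
    · obtain ⟨i0, hi0⟩ := hb.1 _ (List.getLast_mem hne)
      have hlq : c.blocks.getLast? = some (a i0) := by
        rw [List.getLast?_eq_getLast hne, hi0]
      rw [risesL_concat c.blocks hne (a j)]
      push_cast
      congr 1
      have hcond : (c.blocks.getLast hne < a j)
          ↔ (∃ i ∈ Finset.univ.filter (· < j), c.blocks.getLast? = some (a i)) := by
        constructor
        · intro hlt
          refine ⟨i0, ?_, hlq⟩
          simp only [Finset.mem_filter, Finset.mem_univ, true_and]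
          rw [← hmono.lt_iff_lt, hi0]
          exact hlt
        · rintro ⟨i, hi, hone⟩
          simp only [Finset.mem_filter, Finset.mem_univ, true_and] at hi
          have hii : a i = a i0 := Option.some.inj (hone.symm.trans hlq)
          rw [← hi0, ← hii]
          exact hmono hi
      by_cases hlt : c.blocks.getLast hne < a j
      · rw [if_pos hlt, chi_true (hcond.mp hlt)]
      · rw [if_neg hlt, chi_false (fun h => hlt (hcond.mpr h))]

lemma E1 (a : Fin k → ℕ) (hpos : ∀ i, 0 < a i) (hinj : Function.Injective a) (j : Fin k) :
    Cs a j = ((X 0 : MvPowerSeries (Fin 2) ℚ) ^ (a j) * X 1)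
      * (1 + ∑ i ∈ Finset.univ.filter (· ≠ j), Cs a i) := by
  apply MvPowerSeries.ext
  intro m
  rw [u_eq a j, coeff_monomial_mul, MvPowerSeries.coeff_apply]
  by_cases hle : ee a j ≤ m
  · rw [if_pos hle, one_mul]
    obtain ⟨h0, h1⟩ := (ee_le_iff a j m).mp hle
    rw [map_add, MvPowerSeries.coeff_one, map_sum]
    show csum a (fun _ => (1 : ℚ)) (fun l => l.getLast? = some (a j)) (m 0) (m 1) = _
    have hm1 : m 1 = (m 1 - 1) + 1 := by omega
    rw [hm1, key1 a hpos hinj j (m 0) (m 1 - 1) h0]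
    congr 1
    · exact if_congr (sub_eq_zero_iff a j m).symm rfl rfl
    · refine Finset.sum_congr rfl ?_
      intro i _
      rw [MvPowerSeries.coeff_apply]
      show _ = csum a _ _ ((m - ee a j) 0) ((m - ee a j) 1)
      rw [sub_apply0, sub_apply1]
  · rw [if_neg hle]
    rw [ee_le_iff] at hle
    show csum a (fun _ => (1 : ℚ)) (fun l => l.getLast? = some (a j)) (m 0) (m 1) = 0
    exact csum_last_zero a j _ _ _ hle

lemma E2 (a : Fin k → ℕ) (hpos : ∀ i, 0 < a i) (hmono : StrictMono a) (j : Fin k) :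
    Rs a j = ((X 0 : MvPowerSeries (Fin 2) ℚ) ^ (a j) * X 1)
      * ((∑ i ∈ Finset.univ.filter (· ≠ j), Rs a i)
          + ∑ i ∈ Finset.univ.filter (· < j), Cs a i) := by
  apply MvPowerSeries.ext
  intro m
  rw [u_eq a j, coeff_monomial_mul, MvPowerSeries.coeff_apply]
  by_cases hle : ee a j ≤ m
  · rw [if_pos hle, one_mul]
    obtain ⟨h0, h1⟩ := (ee_le_iff a j m).mp hle
    rw [map_add, map_sum, map_sum]
    show csum a (fun l => (risesL l : ℚ)) (fun l => l.getLast? = some (a j)) (m 0) (m 1) = _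
    have hm1 : m 1 = (m 1 - 1) + 1 := by omega
    rw [hm1, key2 a hpos hmono j (m 0) (m 1 - 1) h0]
    congr 1
    · refine Finset.sum_congr rfl ?_
      intro i _
      rw [MvPowerSeries.coeff_apply]
      show _ = csum a _ _ ((m - ee a j) 0) ((m - ee a j) 1)
      rw [sub_apply0, sub_apply1]
    · refine Finset.sum_congr rfl ?_
      intro i _
      rw [MvPowerSeries.coeff_apply]
      show _ = csum a _ _ ((m - ee a j) 0) ((m - ee a j) 1)
      rw [sub_apply0, sub_apply1]
  · rw [if_neg hle]
    rw [ee_le_iff] at hle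
    show csum a (fun l => (risesL l : ℚ)) (fun l => l.getLast? = some (a j)) (m 0) (m 1) = 0
    exact csum_last_zero a j _ _ _ hle

lemma E3 (a : Fin k → ℕ) (hinj : Function.Injective a) :
    eRises a = ∑ j : Fin k, Rs a j := by
  apply MvPowerSeries.ext
  intro m
  rw [map_sum]
  have hrhs : ∑ j : Fin k, (coeff m) (Rs a j)
      = ∑ j : Fin k, csum a (fun l => (risesL l : ℚ))
          (fun l => l.getLast? = some (a j)) (m 0) (m 1) :=
    Finset.sum_congr rfl (fun j _ => by rw [MvPowerSeries.coeff_apply]; rfl)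
  rw [hrhs, sum_last a hinj _ Finset.univ (m 0) (m 1), MvPowerSeries.coeff_apply]
  show ((∑ c ∈ Finset.univ.filter (fun c : Composition (m 0) =>
      (∀ b ∈ c.blocks, ∃ i, a i = b) ∧ c.blocks.Chain' (· ≠ ·) ∧ c.length = m 1),
      risesL c.blocks : ℕ) : ℚ) = _
  rw [Nat.cast_sum]
  have h1 : ∑ c ∈ Finset.univ.filter (fun c : Composition (m 0) =>
      (∀ b ∈ c.blocks, ∃ i, a i = b) ∧ c.blocks.Chain' (· ≠ ·) ∧ c.length = m 1),
      ((risesL c.blocks : ℚ))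
      = csum a (fun l => (risesL l : ℚ)) (fun _ => True) (m 0) (m 1) := by
    unfold csum
    refine Finset.sum_congr ?_ (fun _ _ => rfl)
    ext c
    simp only [Finset.mem_filter, Finset.mem_univ, true_and, baseP, Composition.length,
      and_true]
    exact ⟨fun h => (@Finset.mem_filter _ _ (fun _ => Classical.propDecidable _) _ _).mpr ⟨Finset.mem_univ _, h⟩,
      fun h => ((@Finset.mem_filter _ _ (fun _ => Classical.propDecidable _) _ _).mp h).2⟩
  rw [h1, csum_split (P := fun l => l = []),
    csum_rises_nil a _ _ _ (fun l hl => hl.2), zero_add,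
    csum_congr (Q' := fun l => ∃ i ∈ (Finset.univ : Finset (Fin k)),
      l.getLast? = some (a i)) (fun c hb => ?_)]
  constructor
  · rintro ⟨-, hnotnil⟩
    have hlast? := List.getLast?_eq_getLast hnotnil
    obtain ⟨i0, hi0⟩ := hb.1 _ (List.getLast_mem hnotnil)
    exact ⟨i0, Finset.mem_univ _, by rw [hlast?, hi0]⟩
  · rintro ⟨i, -, hlast⟩
    refine ⟨trivial, ?_⟩
    intro hnil
    rw [hnil] at hlast
    simp at hlast

lemma eDrops_eq (a : Fin k → ℕ) : eDrops a = eRises a := by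
  apply MvPowerSeries.ext
  intro m
  show ((∑ c ∈ Finset.univ.filter (fun c : Composition (m 0) =>
      (∀ b ∈ c.blocks, ∃ i, a i = b) ∧ c.blocks.Chain' (· ≠ ·) ∧ c.length = m 1),
      dropsL c.blocks : ℕ) : ℚ)
    = ((∑ c ∈ Finset.univ.filter (fun c : Composition (m 0) =>
      (∀ b ∈ c.blocks, ∃ i, a i = b) ∧ c.blocks.Chain' (· ≠ ·) ∧ c.length = m 1),
      risesL c.blocks : ℕ) : ℚ)
  congr 1
  refine Finset.sum_bij' (i := fun c hc => ?_) (j := fun c hc => ?_) ?_ ?_ ?_ ?_ ?_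
  · exact ⟨c.blocks.reverse, fun {b} hb => c.blocks_pos (List.mem_reverse.mp hb),
      by rw [List.sum_reverse]; exact c.blocks_sum⟩
  · exact ⟨c.blocks.reverse, fun {b} hb => c.blocks_pos (List.mem_reverse.mp hb),
      by rw [List.sum_reverse]; exact c.blocks_sum⟩
  · intro c hc
    simp only [Finset.mem_filter, Finset.mem_univ, true_and] at hc ⊢
    obtain ⟨hparts, hchain, hlen⟩ := hc
    refine ⟨?_, ?_, ?_⟩
    · intro b hb
      exact hparts b (List.mem_reverse.mp hb)
    · exact List.isChain_reverse.mpr (hchain.imp fun _ _ h => Ne.symm h)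
    · show c.blocks.reverse.length = m 1
      rw [List.length_reverse]
      exact hlen
  · intro c hc
    simp only [Finset.mem_filter, Finset.mem_univ, true_and] at hc ⊢
    obtain ⟨hparts, hchain, hlen⟩ := hc
    refine ⟨?_, ?_, ?_⟩
    · intro b hb
      exact hparts b (List.mem_reverse.mp hb)
    · exact List.isChain_reverse.mpr (hchain.imp fun _ _ h => Ne.symm h)
    · show c.blocks.reverse.length = m 1
      rw [List.length_reverse]
      exact hlen
  · intro c hc
    refine Composition.ext ?_
    show c.blocks.reverse.reverse = c.blocks
    exact List.reverse_reverse _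
  · intro c hc
    refine Composition.ext ?_
    show c.blocks.reverse.reverse = c.blocks
    exact List.reverse_reverse _
  · intro c hc
    show dropsL c.blocks = risesL c.blocks.reverse
    exact (risesL_reverse c.blocks).symm

end Stmt13Aux

open Stmt13Aux

theorem stmt13 {k : ℕ} (hk : 1 ≤ k) (a : Fin k → ℕ) (hpos : ∀ i, 0 < a i)
    (hmono : StrictMono a) :
    (eRises a = (∑ j : Fin k, TT a j * ∑ i ∈ Finset.univ.filter (· < j), TT a i)
        * ((1 - ∑ j : Fin k, TT a j) ^ 2)⁻¹)
    ∧ (eDrops a = (∑ j : Fin k, TT a j * ∑ i ∈ Finset.univ.filter (· < j), TT a i)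
        * ((1 - ∑ j : Fin k, TT a j) ^ 2)⁻¹) := by
  have hinj := hmono.injective
  set G : MvPowerSeries (Fin 2) ℚ :=
    ∑ j : Fin k, TT a j * ∑ i ∈ Finset.univ.filter (· < j), TT a i with hG
  set S : MvPowerSeries (Fin 2) ℚ := ∑ j : Fin k, TT a j with hS
  have hcu : ∀ j, constantCoeff ((X 0 : MvPowerSeries (Fin 2) ℚ) ^ a j * X 1) = 0 := by
    intro j
    rw [map_mul, map_pow, constantCoeff_X, zero_pow (hpos j).ne', zero_mul]
  have honeu : ∀ j, constantCoeff
      (1 + (X 0 : MvPowerSeries (Fin 2) ℚ) ^ a j * X 1) = 1 := by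
    intro j
    rw [map_add, map_one, hcu j, add_zero]
  have hTT : ∀ j, TT a j = ((X 0 : MvPowerSeries (Fin 2) ℚ) ^ a j * X 1)
      * (1 + (X 0 : MvPowerSeries (Fin 2) ℚ) ^ a j * X 1)⁻¹ := fun j => rfl
  have hTu : ∀ j, (1 + (X 0 : MvPowerSeries (Fin 2) ℚ) ^ a j * X 1) * TT a j
      = (X 0 : MvPowerSeries (Fin 2) ℚ) ^ a j * X 1 := by
    intro j
    rw [hTT j]
    have h1 : (1 + (X 0 : MvPowerSeries (Fin 2) ℚ) ^ a j * X 1)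
        * (((X 0 : MvPowerSeries (Fin 2) ℚ) ^ a j * X 1)
          * (1 + (X 0 : MvPowerSeries (Fin 2) ℚ) ^ a j * X 1)⁻¹)
        = ((X 0 : MvPowerSeries (Fin 2) ℚ) ^ a j * X 1)
          * ((1 + (X 0 : MvPowerSeries (Fin 2) ℚ) ^ a j * X 1)
            * (1 + (X 0 : MvPowerSeries (Fin 2) ℚ) ^ a j * X 1)⁻¹) := by ring
    rw [h1, MvPowerSeries.mul_inv_cancel _ (by rw [honeu j]; exact one_ne_zero), mul_one]
  have hu1 : ∀ j, IsUnit (1 + (X 0 : MvPowerSeries (Fin 2) ℚ) ^ a j * X 1) := fun j =>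
    isUnit_iff_constantCoeff.mpr (by rw [honeu j]; exact isUnit_one)
  have hcT : ∀ j, constantCoeff (TT a j) = 0 := by
    intro j
    rw [hTT j, map_mul, hcu j, zero_mul]
  have hcS : constantCoeff (1 - S) = 1 := by
    rw [map_sub, map_one, hS, map_sum]
    simp [hcT]
  set SC : MvPowerSeries (Fin 2) ℚ := ∑ i : Fin k, Cs a i with hSC
  have hCj : ∀ j, Cs a j = TT a j * (1 + SC) := by
    intro j
    have hsplit : ∑ i ∈ Finset.univ.filter (· ≠ j), Cs a i = SC - Cs a j := by
      rw [Finset.filter_ne', Finset.sum_erase_eq_sub (Finset.mem_univ j), ← hSC]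
    have h1 : (1 + (X 0 : MvPowerSeries (Fin 2) ℚ) ^ a j * X 1) * Cs a j
        = ((X 0 : MvPowerSeries (Fin 2) ℚ) ^ a j * X 1) * (1 + SC) := by
      linear_combination (E1 a hpos hinj j)
        + ((X 0 : MvPowerSeries (Fin 2) ℚ) ^ a j * X 1) * hsplit
    have h2 : (1 + (X 0 : MvPowerSeries (Fin 2) ℚ) ^ a j * X 1) * (TT a j * (1 + SC))
        = ((X 0 : MvPowerSeries (Fin 2) ℚ) ^ a j * X 1) * (1 + SC) := by
      calc (1 + (X 0 : MvPowerSeries (Fin 2) ℚ) ^ a j * X 1) * (TT a j * (1 + SC))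
          = ((1 + (X 0 : MvPowerSeries (Fin 2) ℚ) ^ a j * X 1) * TT a j) * (1 + SC) := by ring
        _ = _ := by rw [hTu j]
    exact (hu1 j).mul_left_cancel (h1.trans h2.symm)
  have hSCeq : (1 - S) * (1 + SC) = 1 := by
    have h3 : SC = S * (1 + SC) := by
      calc SC = ∑ j : Fin k, TT a j * (1 + SC) := by
            rw [hSC]
            exact Finset.sum_congr rfl (fun j _ => hCj j)
        _ = S * (1 + SC) := by rw [hS, Finset.sum_mul]
    linear_combination h3
  set R : MvPowerSeries (Fin 2) ℚ := ∑ j : Fin k, Rs a j with hR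
  have hRj : ∀ j, Rs a j = TT a j
      * (R + (∑ i ∈ Finset.univ.filter (· < j), TT a i) * (1 + SC)) := by
    intro j
    have hsplit : ∑ i ∈ Finset.univ.filter (· ≠ j), Rs a i = R - Rs a j := by
      rw [Finset.filter_ne', Finset.sum_erase_eq_sub (Finset.mem_univ j), ← hR]
    have hCsum : ∑ i ∈ Finset.univ.filter (· < j), Cs a i
        = (∑ i ∈ Finset.univ.filter (· < j), TT a i) * (1 + SC) := by
      rw [Finset.sum_mul]
      exact Finset.sum_congr rfl (fun i _ => hCj i)
    have h1 : (1 + (X 0 : MvPowerSeries (Fin 2) ℚ) ^ a j * X 1) * Rs a j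
        = ((X 0 : MvPowerSeries (Fin 2) ℚ) ^ a j * X 1)
          * (R + (∑ i ∈ Finset.univ.filter (· < j), TT a i) * (1 + SC)) := by
      linear_combination (E2 a hpos hmono j)
        + ((X 0 : MvPowerSeries (Fin 2) ℚ) ^ a j * X 1) * hsplit
        + ((X 0 : MvPowerSeries (Fin 2) ℚ) ^ a j * X 1) * hCsum
    have h2 : (1 + (X 0 : MvPowerSeries (Fin 2) ℚ) ^ a j * X 1)
        * (TT a j * (R + (∑ i ∈ Finset.univ.filter (· < j), TT a i) * (1 + SC)))
        = ((X 0 : MvPowerSeries (Fin 2) ℚ) ^ a j * X 1)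
          * (R + (∑ i ∈ Finset.univ.filter (· < j), TT a i) * (1 + SC)) := by
      calc (1 + (X 0 : MvPowerSeries (Fin 2) ℚ) ^ a j * X 1)
          * (TT a j * (R + (∑ i ∈ Finset.univ.filter (· < j), TT a i) * (1 + SC)))
          = ((1 + (X 0 : MvPowerSeries (Fin 2) ℚ) ^ a j * X 1) * TT a j)
            * (R + (∑ i ∈ Finset.univ.filter (· < j), TT a i) * (1 + SC)) := by ring
        _ = _ := by rw [hTu j]
    exact (hu1 j).mul_left_cancel (h1.trans h2.symm)
  have hRalg : (1 - S) * R = G * (1 + SC) := by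
    have h4 : R = S * R + G * (1 + SC) := by
      calc R = ∑ j : Fin k, TT a j
            * (R + (∑ i ∈ Finset.univ.filter (· < j), TT a i) * (1 + SC)) := by
            rw [hR]
            exact Finset.sum_congr rfl (fun j _ => hRj j)
        _ = ∑ j : Fin k, (TT a j * R
            + (TT a j * ∑ i ∈ Finset.univ.filter (· < j), TT a i) * (1 + SC)) :=
            Finset.sum_congr rfl (fun j _ => by ring)
        _ = (∑ j : Fin k, TT a j * R)
            + ∑ j : Fin k, (TT a j * ∑ i ∈ Finset.univ.filter (· < j), TT a i) * (1 + SC) :=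
            Finset.sum_add_distrib
        _ = S * R + G * (1 + SC) := by rw [hS, hG, Finset.sum_mul, Finset.sum_mul]
    linear_combination h4
  have hfin : eRises a * (1 - S) ^ 2 = G := by
    rw [E3 a hinj, ← hR]
    linear_combination (1 - S) * hRalg + G * hSCeq
  have hcS2 : constantCoeff ((1 - S) ^ 2) ≠ 0 := by
    rw [map_pow, hcS]
    norm_num
  have hinv2 : (1 - S) ^ 2 * ((1 - S) ^ 2)⁻¹ = 1 := MvPowerSeries.mul_inv_cancel _ hcS2
  have hmain : eRises a = G * ((1 - S) ^ 2)⁻¹ := by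
    calc eRises a = eRises a * ((1 - S) ^ 2 * ((1 - S) ^ 2)⁻¹) := by rw [hinv2, mul_one]
      _ = (eRises a * (1 - S) ^ 2) * ((1 - S) ^ 2)⁻¹ := by ring
      _ = G * ((1 - S) ^ 2)⁻¹ := by rw [hfin]
  exact ⟨hmain, by rw [eDrops_eq a]; exact hmain⟩
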